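/- arXiv:1702.08282 — 7 statements merged into one kernel-verified Lean document; each statement's English description precedes it below -/
import Mathlib

section
/- Let G be a groupoid with morphism set A := Σ (x y : G₀), (x ⟶ y), product S ∗ R on subsets of A as above, and unit section 1. Call S ⊆ A an α-section if for every object x there is a unique element of S with source x, and a β-section if for every object x there is a unique element of S with target x; a bisection is a subset that is both. Then: (i) the α-sections form a submonoid of (𝒫(A), ∗, 1), and so do the β-sections; (ii) the pointwise inverse S⁻¹ := { ⟨y, x, inv f⟩ : ⟨x, y, f⟩ ∈ S } of an α-section is a β-section and vice versa; (iii) the set of bisections is a group under ∗: it contains 1, is closed under ∗ and under S ↦ S⁻¹, and S ∗ S⁻¹ = 1 = S⁻¹ ∗ S for every bisection S. -/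
open CategoryTheory

/-- The type of all morphisms of a groupoid, recorded with source and target. -/
abbrev Arr (G₀ : Type*) [Groupoid G₀] := Σ (x y : G₀), x ⟶ y

/-- The product `S ∗ R` of two subsets of the morphism set. -/
def amul {G₀ : Type*} [Groupoid G₀] (S R : Set (Arr G₀)) : Set (Arr G₀) :=
  {a | ∃ (x y z : G₀) (f : x ⟶ y) (g : y ⟶ z),
    (⟨x, y, f⟩ : Arr G₀) ∈ R ∧ (⟨y, z, g⟩ : Arr G₀) ∈ S ∧ a = ⟨x, z, f ≫ g⟩}

/-- The unit section. -/
def aunit (G₀ : Type*) [Groupoid G₀] : Set (Arr G₀) :=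
  {a | ∃ x : G₀, a = ⟨x, x, 𝟙 x⟩}

/-- The pointwise inverse `S⁻¹` of a subset of the morphism set. -/
def ainv {G₀ : Type*} [Groupoid G₀] (S : Set (Arr G₀)) : Set (Arr G₀) :=
  {a | ∃ (x y : G₀) (f : x ⟶ y),
    (⟨x, y, f⟩ : Arr G₀) ∈ S ∧ a = ⟨y, x, Groupoid.inv f⟩}

/-- `S` is an α-section: for every object `x` there is a unique element of `S`
with source `x`. -/
def IsAlphaSection {G₀ : Type*} [Groupoid G₀] (S : Set (Arr G₀)) : Prop :=
  ∀ x : G₀, ∃! a : Arr G₀, a ∈ S ∧ a.1 = x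

/-- `S` is a β-section: for every object `x` there is a unique element of `S`
with target `x`. -/
def IsBetaSection {G₀ : Type*} [Groupoid G₀] (S : Set (Arr G₀)) : Prop :=
  ∀ x : G₀, ∃! a : Arr G₀, a ∈ S ∧ a.2.1 = x

/-- A bisection is both an α-section and a β-section. -/
def IsBisection {G₀ : Type*} [Groupoid G₀] (S : Set (Arr G₀)) : Prop :=
  IsAlphaSection S ∧ IsBetaSection S

section Aux
variable {G₀ : Type*} [Groupoid G₀]

lemma arr_mk_inj_src {x y y' : G₀} {f : x ⟶ y} {f' : x ⟶ y'}
    (h : (⟨x, y, f⟩ : Arr G₀) = ⟨x, y', f'⟩) : y = y' ∧ HEq f f' := by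
  obtain ⟨-, h⟩ := Sigma.mk.inj_iff.mp h
  obtain ⟨h1, h2⟩ := Sigma.mk.inj_iff.mp (eq_of_heq h)
  exact ⟨h1, h2⟩

lemma arr_mk_inj_tgt {x x' y : G₀} {f : x ⟶ y} {f' : x' ⟶ y}
    (h : (⟨x, y, f⟩ : Arr G₀) = ⟨x', y, f'⟩) : x = x' ∧ HEq f f' := by
  obtain ⟨h1, h2⟩ := Sigma.mk.inj_iff.mp h
  subst h1
  obtain ⟨-, h3⟩ := Sigma.mk.inj_iff.mp (eq_of_heq h2)
  exact ⟨rfl, h3⟩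

lemma aux_alpha_unit : IsAlphaSection (aunit G₀) := by
  intro x
  refine ⟨⟨x, x, 𝟙 x⟩, ⟨⟨x, rfl⟩, rfl⟩, ?_⟩
  rintro a ⟨⟨y, rfl⟩, h⟩
  dsimp at h; subst h; rfl

lemma aux_beta_unit : IsBetaSection (aunit G₀) := by
  intro x
  refine ⟨⟨x, x, 𝟙 x⟩, ⟨⟨x, rfl⟩, rfl⟩, ?_⟩
  rintro a ⟨⟨y, rfl⟩, h⟩
  dsimp at h; subst h; rfl

lemma aux_alpha_mul {S R : Set (Arr G₀)} (hS : IsAlphaSection S)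
    (hR : IsAlphaSection R) : IsAlphaSection (amul S R) := by
  intro x
  obtain ⟨⟨x', y, f⟩, ⟨hfR, rfl⟩, hfu⟩ := hR x
  obtain ⟨⟨y', z, g⟩, ⟨hgS, rfl⟩, hgu⟩ := hS y
  refine ⟨⟨x', z, f ≫ g⟩, ⟨⟨x', y', z, f, g, hfR, hgS, rfl⟩, rfl⟩, ?_⟩
  rintro a ⟨⟨x₁, y₁, z₁, f₁, g₁, hf₁, hg₁, rfl⟩, h1⟩
  dsimp at h1; subst h1
  obtain ⟨rfl, hf⟩ := arr_mk_inj_src (hfu ⟨x₁, y₁, f₁⟩ ⟨hf₁, rfl⟩)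
  cases eq_of_heq hf
  obtain ⟨rfl, hg⟩ := arr_mk_inj_src (hgu ⟨y₁, z₁, g₁⟩ ⟨hg₁, rfl⟩)
  cases eq_of_heq hg
  rfl

lemma aux_beta_mul {S R : Set (Arr G₀)} (hS : IsBetaSection S)
    (hR : IsBetaSection R) : IsBetaSection (amul S R) := by
  intro x
  obtain ⟨⟨y, x', g⟩, ⟨hgS, rfl⟩, hgu⟩ := hS x
  obtain ⟨⟨w, y', f⟩, ⟨hfR, rfl⟩, hfu⟩ := hR y
  refine ⟨⟨w, x', f ≫ g⟩, ⟨⟨w, y', x', f, g, hfR, hgS, rfl⟩, rfl⟩, ?_⟩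
  rintro a ⟨⟨x₁, y₁, z₁, f₁, g₁, hf₁, hg₁, rfl⟩, h1⟩
  dsimp at h1; subst h1
  obtain ⟨rfl, hg⟩ := arr_mk_inj_tgt (hgu ⟨y₁, z₁, g₁⟩ ⟨hg₁, rfl⟩)
  cases eq_of_heq hg
  obtain ⟨rfl, hf⟩ := arr_mk_inj_tgt (hfu ⟨x₁, y₁, f₁⟩ ⟨hf₁, rfl⟩)
  cases eq_of_heq hf
  rfl

lemma aux_beta_ainv {S : Set (Arr G₀)} (hS : IsAlphaSection S) :
    IsBetaSection (ainv S) := by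
  intro x
  obtain ⟨⟨x', y, f⟩, ⟨hfS, rfl⟩, hfu⟩ := hS x
  refine ⟨⟨y, x', Groupoid.inv f⟩, ⟨⟨x', y, f, hfS, rfl⟩, rfl⟩, ?_⟩
  rintro a ⟨⟨x₁, y₁, f₁, hf₁, rfl⟩, h1⟩
  dsimp at h1; subst h1
  obtain ⟨rfl, hf⟩ := arr_mk_inj_src (hfu ⟨x₁, y₁, f₁⟩ ⟨hf₁, rfl⟩)
  cases eq_of_heq hf
  rfl

lemma aux_alpha_ainv {S : Set (Arr G₀)} (hS : IsBetaSection S) :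
    IsAlphaSection (ainv S) := by
  intro x
  obtain ⟨⟨y, x', f⟩, ⟨hfS, rfl⟩, hfu⟩ := hS x
  refine ⟨⟨x', y, Groupoid.inv f⟩, ⟨⟨y, x', f, hfS, rfl⟩, rfl⟩, ?_⟩
  rintro a ⟨⟨x₁, y₁, f₁, hf₁, rfl⟩, h1⟩
  dsimp at h1; subst h1
  obtain ⟨rfl, hf⟩ := arr_mk_inj_tgt (hfu ⟨x₁, y₁, f₁⟩ ⟨hf₁, rfl⟩)
  cases eq_of_heq hf
  rfl

lemma aux_mul_ainv {S : Set (Arr G₀)} (hS : IsBisection S) :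
    amul S (ainv S) = aunit G₀ := by
  ext a
  constructor
  · rintro ⟨x, y, z, f, g, ⟨p, q, f₀, hf₀, heq⟩, hgS, rfl⟩
    obtain ⟨rfl, h2⟩ := Sigma.mk.inj_iff.mp heq
    obtain ⟨rfl, h3⟩ := Sigma.mk.inj_iff.mp (eq_of_heq h2)
    cases eq_of_heq h3
    obtain ⟨rfl, hg⟩ := arr_mk_inj_src ((hS.1 y).unique ⟨hf₀, rfl⟩ ⟨hgS, rfl⟩)
    cases eq_of_heq hg
    exact ⟨x, by simp⟩
  · rintro ⟨x, rfl⟩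
    obtain ⟨⟨p, x', f⟩, ⟨hfS, rfl⟩, -⟩ := hS.2 x
    exact ⟨x', p, x', Groupoid.inv f, f, ⟨p, x', f, hfS, rfl⟩, hfS, by simp⟩

lemma aux_ainv_mul {S : Set (Arr G₀)} (hS : IsBisection S) :
    amul (ainv S) S = aunit G₀ := by
  ext a
  constructor
  · rintro ⟨x, y, z, f, g, hfS, ⟨p, q, g₀, hg₀, heq⟩, rfl⟩
    obtain ⟨rfl, h2⟩ := Sigma.mk.inj_iff.mp heq
    obtain ⟨rfl, h3⟩ := Sigma.mk.inj_iff.mp (eq_of_heq h2)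
    cases eq_of_heq h3
    obtain ⟨rfl, hf⟩ := arr_mk_inj_tgt ((hS.2 y).unique ⟨hg₀, rfl⟩ ⟨hfS, rfl⟩)
    cases eq_of_heq hf
    exact ⟨z, by simp⟩
  · rintro ⟨x, rfl⟩
    obtain ⟨⟨x', p, f⟩, ⟨hfS, rfl⟩, -⟩ := hS.1 x
    exact ⟨x', p, x', f, Groupoid.inv f, hfS, ⟨x', p, f, hfS, rfl⟩, by simp⟩

end Aux

/-- (i) α-sections and β-sections form submonoids of the power set monoid;
(ii) the pointwise inverse of an α-section is a β-section and vice versa;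
(iii) the bisections form a group under `∗`. -/
theorem sections_submonoid_bisections_group {G₀ : Type*} [Groupoid G₀] :
    -- (i) α-sections form a submonoid
    (IsAlphaSection (aunit G₀) ∧
      ∀ S R : Set (Arr G₀), IsAlphaSection S → IsAlphaSection R →
        IsAlphaSection (amul S R)) ∧
    -- (i) β-sections form a submonoid
    (IsBetaSection (aunit G₀) ∧
      ∀ S R : Set (Arr G₀), IsBetaSection S → IsBetaSection R →
        IsBetaSection (amul S R)) ∧
    -- (ii)
    (∀ S : Set (Arr G₀), IsAlphaSection S → IsBetaSection (ainv S)) ∧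
    (∀ S : Set (Arr G₀), IsBetaSection S → IsAlphaSection (ainv S)) ∧
    -- (iii)
    IsBisection (aunit G₀) ∧
    (∀ S R : Set (Arr G₀), IsBisection S → IsBisection R → IsBisection (amul S R)) ∧
    (∀ S : Set (Arr G₀), IsBisection S → IsBisection (ainv S)) ∧
    (∀ S : Set (Arr G₀), IsBisection S →
      amul S (ainv S) = aunit G₀ ∧ amul (ainv S) S = aunit G₀) := by
  refine ⟨⟨aux_alpha_unit, fun S R hS hR => aux_alpha_mul hS hR⟩,
    ⟨aux_beta_unit, fun S R hS hR => aux_beta_mul hS hR⟩,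
    fun S hS => aux_beta_ainv hS, fun S hS => aux_alpha_ainv hS,
    ⟨aux_alpha_unit, aux_beta_unit⟩,
    fun S R hS hR => ⟨aux_alpha_mul hS.1 hR.1, aux_beta_mul hS.2 hR.2⟩,
    fun S hS => ⟨aux_alpha_ainv hS.2, aux_beta_ainv hS.1⟩,
    fun S hS => ⟨aux_mul_ainv hS, aux_ainv_mul hS⟩⟩
end

section
/- Let 𝕂 be a commutative ring, V and V' 𝕂-modules, U ⊆ V and U' ⊆ V' nonempty subsets, f : V → V' a map with f(U) ⊆ U', and t ∈ 𝕂 invertible. Define f_t(x,v) := (f(x), t⁻¹·(f(x + t·v) − f(x))). Then: (i) f_t maps U_t into U'_t; (ii) f_t is a groupoid morphism covering f: α'(f_t(x,v)) = f(α(x,v)) and β'(f_t(x,v)) = f(β(x,v)) for all (x,v) ∈ U_t; (iii) whenever (x',v') ∗ (x,v) is defined in U_t, the images f_t(x',v') and f_t(x,v) are composable in U'_t and f_t((x',v') ∗ (x,v)) = f_t(x',v') ∗ f_t(x,v). -/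
/-- For invertible `t`, the tangent map `f_t(x,v) = (f(x), t⁻¹·(f(x+t·v) − f(x)))`
is a groupoid morphism (functor) from `U_t` to `U'_t` covering `f`. -/
theorem tangent_map_functor {K V V' : Type*} [CommRing K]
    [AddCommGroup V] [Module K V] [AddCommGroup V'] [Module K V']
    (U : Set V) (U' : Set V') (hU : U.Nonempty) (hU' : U'.Nonempty)
    (f : V → V') (hf : Set.MapsTo f U U')
    (t ti : K) (ht : t * ti = 1)
    (Ut : Set (V × V)) (hUt : Ut = {p | p.1 ∈ U ∧ p.1 + t • p.2 ∈ U})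
    (Ut' : Set (V' × V')) (hUt' : Ut' = {p | p.1 ∈ U' ∧ p.1 + t • p.2 ∈ U'})
    (ft : V × V → V' × V')
    (hft : ∀ p, ft p = (f p.1, ti • (f (p.1 + t • p.2) - f p.1))) :
    -- (i) f_t maps U_t into U'_t
    Set.MapsTo ft Ut Ut' ∧
    -- (ii) f_t covers f: α'(f_t(x,v)) = f(α(x,v)) and β'(f_t(x,v)) = f(β(x,v))
    (∀ p, p ∈ Ut → (ft p).1 = f p.1 ∧ (ft p).1 + t • (ft p).2 = f (p.1 + t • p.2)) ∧
    -- (iii) f_t respects the partial products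
    (∀ a b, a ∈ Ut → b ∈ Ut → a.1 = b.1 + t • b.2 →
      (ft a).1 = (ft b).1 + t • (ft b).2 ∧
      ft (b.1, b.2 + a.2) = ((ft b).1, (ft b).2 + (ft a).2)) := by
  have key : ∀ p : V × V, (ft p).1 + t • (ft p).2 = f (p.1 + t • p.2) := by
    intro p
    rw [hft]
    simp [smul_smul, ht]
  refine ⟨?_, ?_, ?_⟩
  · intro p hp
    rw [hUt] at hp
    rw [hUt']
    refine ⟨?_, ?_⟩
    · rw [hft]; exact hf hp.1
    · rw [key]; exact hf hp.2
  · intro p _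
    exact ⟨by rw [hft], key p⟩
  · intro a b _ _ hab
    have h1 : (ft a).1 = (ft b).1 + t • (ft b).2 := by
      rw [key, hft, hab]
    refine ⟨h1, ?_⟩
    have h2 : b.1 + t • (b.2 + a.2) = a.1 + t • a.2 := by
      rw [hab]; module
    have h3 : b.1 + t • (b.2 + a.2) = b.1 + t • b.2 + t • a.2 := by module
    rw [hft (b.1, b.2 + a.2), hft a, hft b, hab]
    simp only [h3, Prod.mk.injEq, true_and, smul_sub]
    abel
end

section
/- Let U be an open subset of ℝ^d and f : ℝ^d → ℝ^m. Then the following are equivalent: (1) f is of class C¹ on U (ContDiffOn ℝ 1 f U); (2) there exists a slope extension of f on U, i.e. a function F : ℝ^d × ℝ^d × ℝ → ℝ^m, continuous on U^[1] := {(x,v,t) : x ∈ U, x + t•v ∈ U}, with F(x,v,t) = t⁻¹ • (f(x + t•v) − f(x)) for every (x,v,t) ∈ U^[1] with t ≠ 0. Moreover, under these conditions, for every slope extension F, every x ∈ U and every v ∈ ℝ^d, the differential of f is recovered as fderiv ℝ f x v = F(x,v,0). -/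
/-- A slope extension of `f` on `U`: a function continuous on the first extended
domain `U^[1] = {(x,v,t) : x ∈ U, x + t•v ∈ U}` that extends the difference
quotient `t⁻¹ • (f(x + t•v) − f(x))`. -/
def IsSlopeExt {E W : Type*} [NormedAddCommGroup E] [NormedSpace ℝ E]
    [NormedAddCommGroup W] [NormedSpace ℝ W]
    (f : E → W) (U : Set E) (F : E × E × ℝ → W) : Prop :=
  ContinuousOn F {p : E × E × ℝ | p.1 ∈ U ∧ p.1 + p.2.2 • p.2.1 ∈ U} ∧
  ∀ p : E × E × ℝ, p.1 ∈ U → p.1 + p.2.2 • p.2.1 ∈ U → p.2.2 ≠ 0 →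
    F p = (p.2.2)⁻¹ • (f (p.1 + p.2.2 • p.2.1) - f p.1)

/-!
For a `C¹` map, the difference quotient extends to `t = 0` by `fderiv ℝ f x v`, and this
extension is continuous because `f` is strictly differentiable at every point of `U`.

Conversely, `F (x, v, 0)` is the derivative of `t ↦ f (x + t • v)` at `0`, hence homogeneous in
`v`; it is additive because the slope in direction `v + w` telescopes through `x + t • v`, where
joint continuity of `F` applies. On the compact unit sphere, joint continuity makes the difference
quotients converge uniformly in the direction, which turns this linear map into a Fréchet
derivative; it is continuous in `x` because `F` is.
-/

open Filter Topology Asymptotics Set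

variable {E W : Type*} [NormedAddCommGroup E] [NormedSpace ℝ E]
  [NormedAddCommGroup W] [NormedSpace ℝ W]

theorem HasStrictFDerivAt.tendsto_slope {f : E → W} {f' : E →L[ℝ] W} {x : E}
    (hf : HasStrictFDerivAt f f' x) (v : E) :
    Tendsto (fun p : E × E × ℝ => p.2.2⁻¹ • (f (p.1 + p.2.2 • p.2.1) - f p.1))
      (𝓝[{p | p.2.2 ≠ 0}] (x, v, 0)) (𝓝 (f' v)) := by
  have hφ : Tendsto (fun p : E × E × ℝ => (p.1 + p.2.2 • p.2.1, p.1)) (𝓝 (x, v, 0)) (𝓝 (x, x)) :=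
    (Continuous.tendsto' (by fun_prop) _ _ (by simp))
  have hsmul : (fun p : E × E × ℝ => p.2.2 • p.2.1) =O[𝓝 (x, v, 0)] fun p => p.2.2 := by
    simpa using (isBigO_refl (fun p : E × E × ℝ => p.2.2) _).smul
      ((continuous_snd.fst.tendsto (x, v, (0 : ℝ))).isBigO_one (F := ℝ))
  have hrem : (fun p : E × E × ℝ => f (p.1 + p.2.2 • p.2.1) - f p.1 - f' (p.2.2 • p.2.1))
      =o[𝓝 (x, v, 0)] fun p => p.2.2 := by
    have := (hasStrictFDerivAt_iff_isLittleO.1 hf).comp_tendsto hφ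
    simp only [Function.comp_def, add_sub_cancel_left] at this
    exact this.trans_isBigO hsmul
  have hlin : Tendsto (fun p : E × E × ℝ => f' p.2.1) (𝓝 (x, v, 0)) (𝓝 (f' v)) :=
    (f'.continuous.comp continuous_snd.fst).tendsto _
  have := (hrem.tendsto_inv_smul_nhds_zero.add hlin).mono_left
    (nhdsWithin_le_nhds (s := {p : E × E × ℝ | p.2.2 ≠ 0}))
  rw [zero_add] at this
  refine this.congr' ?_
  filter_upwards [self_mem_nhdsWithin] with p (hp : p.2.2 ≠ 0)
  rw [map_smul, smul_sub, smul_sub, inv_smul_smul₀ hp, sub_add_cancel]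

theorem hasFDerivAt_of_tendstoUniformlyOn_sphere {f : E → W} {L : E →L[ℝ] W} {x : E}
    (h : TendstoUniformlyOn (fun (t : ℝ) u => t⁻¹ • (f (x + t • u) - f x)) L (𝓝[>] 0)
      (Metric.sphere 0 1)) :
    HasFDerivAt f L x := by
  rw [hasFDerivAt_iff_isLittleO_nhds_zero, isLittleO_iff]
  intro c hc
  have hnorm := (tendsto_norm_nhdsNE_zero (E := E)).eventually
    (Metric.tendstoUniformlyOn_iff.1 h c hc)
  rw [eventually_nhdsWithin_iff] at hnorm
  filter_upwards [hnorm] with k hk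
  rcases eq_or_ne k 0 with rfl | hk0
  · simp
  have hpos : 0 < ‖k‖ := norm_pos_iff.2 hk0
  have hu : ‖k‖⁻¹ • k ∈ Metric.sphere (0 : E) 1 := by
    simp [norm_smul, hpos.ne']
  have hunit := hk hk0 _ hu
  rw [smul_smul, mul_inv_cancel₀ hpos.ne', one_smul, map_smul, dist_eq_norm, ← smul_sub,
    norm_smul, norm_inv, norm_norm, norm_sub_rev, inv_mul_lt_iff₀ hpos] at hunit
  linarith

def extendedDomain (U : Set E) : Set (E × E × ℝ) :=
  {p | p.1 ∈ U ∧ p.1 + p.2.2 • p.2.1 ∈ U}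

theorem isOpen_extendedDomain {U : Set E} (hU : IsOpen U) : IsOpen (extendedDomain U) :=
  (hU.preimage continuous_fst).inter (hU.preimage (by fun_prop))

theorem mk_zero_mem_extendedDomain {U : Set E} {x : E} (hx : x ∈ U) (v : E) :
    (x, v, 0) ∈ extendedDomain U :=
  ⟨hx, by simpa using hx⟩

theorem IsOpen.eventually_add_smul_mem {U : Set E} (hU : IsOpen U) {x : E} (hx : x ∈ U) (v : E) :
    ∀ᶠ t : ℝ in 𝓝 0, x + t • v ∈ U :=
  (Continuous.tendsto' (by fun_prop) _ _ (by simp)).eventually (hU.mem_nhds hx)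

namespace IsSlopeExt

variable {f : E → W} {U : Set E} {F : E × E × ℝ → W}

theorem continuousAt (hF : IsSlopeExt f U F) (hU : IsOpen U) {p : E × E × ℝ}
    (hp : p ∈ extendedDomain U) : ContinuousAt F p :=
  hF.1.continuousAt ((isOpen_extendedDomain hU).mem_nhds hp)

theorem tendsto_slope (hF : IsSlopeExt f U F) (hU : IsOpen U) {x : E} (hx : x ∈ U) (v : E) :
    Tendsto (fun t : ℝ => t⁻¹ • (f (x + t • v) - f x)) (𝓝[≠] 0) (𝓝 (F (x, v, 0))) := by
  have hcurve : Tendsto (fun t : ℝ => F (x, v, t)) (𝓝[≠] 0) (𝓝 (F (x, v, 0))) :=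
    ((hF.continuousAt hU (mk_zero_mem_extendedDomain hx v)).tendsto.comp
      (Continuous.tendsto' (f := fun t : ℝ => (x, v, t)) (by fun_prop) _ _ rfl)).mono_left
      nhdsWithin_le_nhds
  refine hcurve.congr' ?_
  filter_upwards [nhdsWithin_le_nhds (hU.eventually_add_smul_mem hx v), self_mem_nhdsWithin]
    with t ht (ht0 : t ≠ 0)
  exact hF.2 (x, v, t) hx ht ht0

theorem hasDerivAt_comp_add_smul (hF : IsSlopeExt f U F) (hU : IsOpen U) {x : E} (hx : x ∈ U)
    (v : E) :
    HasDerivAt (fun t : ℝ => f (x + t • v)) (F (x, v, 0)) 0 :=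
  hasDerivAt_iff_tendsto_slope_zero.2 (by simpa using hF.tendsto_slope hU hx v)

theorem fderiv_apply (hF : IsSlopeExt f U F) (hU : IsOpen U) {x : E} (hx : x ∈ U)
    (hf : DifferentiableAt ℝ f x) (v : E) : fderiv ℝ f x v = F (x, v, 0) := by
  have hline : HasDerivAt (fun t : ℝ => x + t • v) v 0 := by
    simpa using ((hasDerivAt_id (0 : ℝ)).smul_const v).const_add x
  have hfx : HasFDerivAt f (fderiv ℝ f x) (x + (0 : ℝ) • v) := by simpa using hf.hasFDerivAt
  exact (hfx.comp_hasDerivAt 0 hline).unique (hF.hasDerivAt_comp_add_smul hU hx v)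

theorem apply_smul_zero (hF : IsSlopeExt f U F) (hU : IsOpen U) {x : E} (hx : x ∈ U)
    (c : ℝ) (v : E) : F (x, c • v, 0) = c • F (x, v, 0) := by
  have hscaled := (hF.hasDerivAt_comp_add_smul hU hx v).scomp_of_eq 0
    ((hasDerivAt_id (0 : ℝ)).const_mul c) (by simp)
  simp only [Function.comp_def, mul_comm c, ← smul_smul, one_smul] at hscaled
  exact (hF.hasDerivAt_comp_add_smul hU hx (c • v)).unique hscaled

theorem apply_add_zero (hF : IsSlopeExt f U F) (hU : IsOpen U) {x : E} (hx : x ∈ U)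
    (v w : E) : F (x, v + w, 0) = F (x, v, 0) + F (x, w, 0) := by
  have hw : Tendsto (fun t : ℝ => F (x + t • v, w, t)) (𝓝[≠] 0) (𝓝 (F (x, w, 0))) :=
    ((hF.continuousAt hU (mk_zero_mem_extendedDomain hx w)).tendsto.comp
      (Continuous.tendsto' (f := fun t : ℝ => (x + t • v, w, t)) (by fun_prop) _ _
        (by simp))).mono_left nhdsWithin_le_nhds
  have htele : ∀ᶠ t in 𝓝[≠] (0 : ℝ), t⁻¹ • (f (x + t • (v + w)) - f x)
      = t⁻¹ • (f (x + t • v) - f x) + F (x + t • v, w, t) := by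
    filter_upwards [nhdsWithin_le_nhds (hU.eventually_add_smul_mem hx v),
      nhdsWithin_le_nhds (hU.eventually_add_smul_mem hx (v + w)), self_mem_nhdsWithin]
      with t hv hvw (ht0 : t ≠ 0)
    rw [smul_add, ← add_assoc] at hvw ⊢
    rw [hF.2 (x + t • v, w, t) hv hvw ht0, ← smul_add, sub_add_sub_cancel']
  exact tendsto_nhds_unique (hF.tendsto_slope hU hx (v + w))
    (((hF.tendsto_slope hU hx v).add hw).congr' (htele.mono fun _ h => h.symm))

theorem tendstoUniformlyOn_sphere [ProperSpace E] (hF : IsSlopeExt f U F) (hU : IsOpen U)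
    {x : E} (hx : x ∈ U) :
    TendstoUniformlyOn (fun (t : ℝ) u => t⁻¹ • (f (x + t • u) - f x)) (fun u => F (x, u, 0))
      (𝓝[>] 0) (Metric.sphere 0 1) := by
  obtain ⟨δ, hδ, hball⟩ := Metric.isOpen_iff.1 hU x hx
  have hmem : ∀ t ∈ Metric.ball (0 : ℝ) δ, ∀ u ∈ Metric.sphere (0 : E) 1,
      x + t • u ∈ U := fun t ht u hu =>
    hball (by simpa [norm_smul, mem_sphere_zero_iff_norm.1 hu] using ht)
  have hcont : ContinuousOn (Function.uncurry fun (t : ℝ) u => F (x, u, t))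
      (Metric.ball 0 δ ×ˢ Metric.sphere 0 1) :=
    hF.1.comp (by fun_prop) fun q hq => ⟨hx, hmem q.1 hq.1 q.2 hq.2⟩
  refine Metric.tendstoUniformlyOn_iff.2 fun ε hε => ?_
  obtain ⟨V, hV, hVε⟩ := (isCompact_sphere (0 : E) 1).mem_uniformity_of_prod hcont
    (Metric.mem_ball_self hδ) (Metric.dist_mem_uniformity hε)
  rw [nhdsWithin_eq_nhds.2 (Metric.isOpen_ball.mem_nhds (Metric.mem_ball_self hδ))] at hV
  filter_upwards [nhdsWithin_le_nhds hV, nhdsWithin_le_nhds (Metric.ball_mem_nhds 0 hδ),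
    self_mem_nhdsWithin] with t htV htδ (ht0 : 0 < t) u hu
  rw [← hF.2 (x, u, t) hx (hmem t htδ u hu) ht0.ne', dist_comm]
  exact hVε t htV u hu

theorem differentiableAt [FiniteDimensional ℝ E] (hF : IsSlopeExt f U F) (hU : IsOpen U) {x : E}
    (hx : x ∈ U) : DifferentiableAt ℝ f x :=
  let L : E →ₗ[ℝ] W :=
    { toFun := fun v => F (x, v, 0)
      map_add' := hF.apply_add_zero hU hx
      map_smul' := hF.apply_smul_zero hU hx }
  (hasFDerivAt_of_tendstoUniformlyOn_sphere (L := L.toContinuousLinearMap)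
    (hF.tendstoUniformlyOn_sphere hU hx)).differentiableAt

theorem contDiffOn [FiniteDimensional ℝ E] (hF : IsSlopeExt f U F) (hU : IsOpen U) :
    ContDiffOn ℝ 1 f U := by
  have hdiff : DifferentiableOn ℝ f U := fun x hx =>
    (hF.differentiableAt hU hx).differentiableWithinAt
  have hcont : ContinuousOn (fderiv ℝ f) U := by
    refine continuousOn_clm_apply.2 fun v => ?_
    refine (hF.1.comp (by fun_prop : Continuous fun x : E => (x, v, (0 : ℝ))).continuousOn
      fun x hx => mk_zero_mem_extendedDomain hx v).congr fun x hx => ?_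
    exact hF.fderiv_apply hU hx (hF.differentiableAt hU hx) v
  rw [show (1 : WithTop ℕ∞) = 0 + 1 from rfl, contDiffOn_succ_iff_fderiv_of_isOpen hU]
  exact ⟨hdiff, by simp, contDiffOn_zero.2 hcont⟩

end IsSlopeExt

noncomputable def slopeExtension (f : E → W) (p : E × E × ℝ) : W :=
  if p.2.2 = 0 then fderiv ℝ f p.1 p.2.1 else p.2.2⁻¹ • (f (p.1 + p.2.2 • p.2.1) - f p.1)

theorem ContDiffOn.isSlopeExt_slopeExtension {f : E → W} {U : Set E} (hU : IsOpen U)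
    (hf : ContDiffOn ℝ 1 f U) : IsSlopeExt f U (slopeExtension f) := by
  refine ⟨fun p hp => ContinuousAt.continuousWithinAt ?_, fun p _ _ ht => if_neg ht⟩
  obtain ⟨x, v, t⟩ := p
  obtain ⟨hx, hxt⟩ := hp
  rcases eq_or_ne t 0 with rfl | ht
  · have hfderiv : ContinuousAt (fun p : E × E × ℝ => fderiv ℝ f p.1 p.2.1) (x, v, 0) :=
      ((hf.continuousOn_fderiv_of_isOpen hU le_rfl).continuousAt (hU.mem_nhds hx)).comp
        continuousAt_fst |>.clm_apply continuousAt_snd.fst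
    rw [ContinuousAt, show slopeExtension f (x, v, 0) = fderiv ℝ f x v from if_pos rfl]
    exact (hfderiv.tendsto.mono_left inf_le_left).if
      (((hf.contDiffAt (hU.mem_nhds hx)).hasStrictFDerivAt one_ne_zero).tendsto_slope v)
  · have hslope : ContinuousAt
        (fun p : E × E × ℝ => p.2.2⁻¹ • (f (p.1 + p.2.2 • p.2.1) - f p.1)) (x, v, t) :=
      (continuousAt_snd.snd.inv₀ ht).smul
        (((hf.continuousOn.continuousAt (hU.mem_nhds hxt)).comp
          (f := fun p : E × E × ℝ => p.1 + p.2.2 • p.2.1) (by fun_prop)).sub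
          ((hf.continuousOn.continuousAt (hU.mem_nhds hx)).comp continuousAt_fst))
    refine hslope.congr ?_
    filter_upwards [continuousAt_snd.snd.eventually_ne ht] with p hp
    exact (if_neg hp).symm

/-- `f : ℝ^d → ℝ^m` is `C¹` on an open set `U` iff its difference quotient
extends to a continuous map on `U^[1]`; in that case any such extension recovers
the differential at `t = 0`. -/
theorem C1_iff_slope_extension {d m : ℕ}
    (U : Set (EuclideanSpace ℝ (Fin d))) (hU : IsOpen U)
    (f : EuclideanSpace ℝ (Fin d) → EuclideanSpace ℝ (Fin m)) :
    (ContDiffOn ℝ 1 f U ↔ ∃ F, IsSlopeExt f U F) ∧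
    (ContDiffOn ℝ 1 f U →
      ∀ F, IsSlopeExt f U F →
        ∀ x ∈ U, ∀ v, fderiv ℝ f x v = F (x, v, 0)) :=
  ⟨⟨fun hf => ⟨slopeExtension f, hf.isSlopeExt_slopeExtension hU⟩,
      fun ⟨_, hF⟩ => hF.contDiffOn hU⟩,
    fun hf _ hF _ hx => hF.fderiv_apply hU hx
      ((hf.differentiableOn one_ne_zero).differentiableAt (hU.mem_nhds hx))⟩
end

section
/- Let U be an open subset of ℝ^d, f : ℝ^d → ℝ^m, and n ≥ 1 a natural number. Define the canonical slope F₀ : ℝ^d × ℝ^d × ℝ → ℝ^m by F₀(x,v,t) := t⁻¹ • (f(x + t•v) − f(x)) if t ≠ 0 and F₀(x,v,0) := fderiv ℝ f x v. Then f is of class Cⁿ on U (ContDiffOn ℝ n f U) if and only if f is of class C¹ on U and F₀ is of class C^{n−1} on the open set U^[1] := {(x,v,t) : x ∈ U, x + t•v ∈ U} (ContDiffOn ℝ (n−1) F₀ U^[1]). -/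
/-!
The canonical slope of a `C¹` map `g` is `F₀ g (x, v, t) = ∫₀¹ Dg(x + σ t v) v dσ`, including
at `t = 0`, and differentiating under the integral sign shows that this is `C^{n-1}` when `g`
is `Cⁿ`. A smooth cutoff equal to `1` near the two points `x` and `x + t v` of `U` replaces `f`
by a globally `Cⁿ` map without changing `F₀` near `(x, v, t)`. Conversely,
`F₀(x, v, 0) = Df(x) v`, so `Df` is `C^{n-1}` on `U` as soon as `F₀` is.
-/

open Set Filter Topology
open scoped ContDiff Manifold

theorem IsCompact.exists_eventually_forall_norm_le {X Y G : Type*} [TopologicalSpace X]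
    [TopologicalSpace Y] [SeminormedAddCommGroup G] {S : Set Y} (hS : IsCompact S)
    {K : X × Y → G} (hK : Continuous K) (x₀ : X) :
    ∃ C, ∀ᶠ x in 𝓝 x₀, ∀ y ∈ S, ‖K (x, y)‖ ≤ C := by
  obtain ⟨C, hC⟩ := (hS.image (hK.comp (Continuous.prodMk_right x₀))).isBounded.exists_norm_le
  refine ⟨C + 1, hS.eventually_forall_of_forall_eventually fun y hy => ?_⟩
  have hlt : ‖K (x₀, y)‖ < C + 1 := (hC _ (mem_image_of_mem _ hy)).trans_lt (lt_add_one C)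
  exact (hK.norm.tendsto (x₀, y) |>.eventually (gt_mem_nhds hlt)).mono fun z hz => hz.le

theorem ContDiff.hasFDerivAt_parametric_intervalIntegral {E F : Type*}
    [NormedAddCommGroup E] [NormedSpace ℝ E] [NormedAddCommGroup F] [NormedSpace ℝ F]
    {K : E × ℝ → F} (hK : ContDiff ℝ 1 K) (a b : ℝ) (x₀ : E) :
    HasFDerivAt (fun x => ∫ t in a..b, K (x, t))
      (∫ t in a..b, fderiv ℝ K (x₀, t) ∘L ContinuousLinearMap.inl ℝ E ℝ) x₀ := by
  have hK' : Continuous fun p : E × ℝ => fderiv ℝ K p ∘L ContinuousLinearMap.inl ℝ E ℝ :=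
    (hK.continuous_fderiv one_ne_zero).clm_comp continuous_const
  obtain ⟨C, hC⟩ := isCompact_uIcc.exists_eventually_forall_norm_le hK' x₀
  obtain ⟨s, hs, hCs⟩ := hC.exists_mem
  refine intervalIntegral.hasFDerivAt_integral_of_dominated_of_fderiv_le (bound := fun _ => C) hs
    (.of_forall fun x => (hK.continuous.comp (Continuous.prodMk_right x)).aestronglyMeasurable)
    ((hK.continuous.comp (Continuous.prodMk_right x₀)).intervalIntegrable a b)
    (hK'.comp (Continuous.prodMk_right x₀)).aestronglyMeasurable
    (.of_forall fun t ht x hx => hCs x hx t (uIoc_subset_uIcc ht))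
    intervalIntegrable_const (.of_forall fun t _ x _ => ?_)
  exact ((hK.differentiable one_ne_zero (x, t)).hasFDerivAt).comp x (hasFDerivAt_prodMk_left x t)

universe u

-- `E` and `F` share a universe because the induction replaces `F` by `E →L[ℝ] F`.
theorem ContDiff.parametric_intervalIntegral {E F : Type u} [NormedAddCommGroup E]
    [NormedSpace ℝ E] [NormedAddCommGroup F] [NormedSpace ℝ F] {K : E × ℝ → F} {k : ℕ}
    (hK : ContDiff ℝ k K) (a b : ℝ) :
    ContDiff ℝ k fun x => ∫ t in a..b, K (x, t) := by
  induction k generalizing F with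
  | zero =>
    rw [Nat.cast_zero, contDiff_zero] at hK ⊢
    exact intervalIntegral.continuous_parametric_intervalIntegral_of_continuous'
      (f := fun x t => K (x, t)) hK a b
  | succ k ih =>
    have hK1 : ContDiff ℝ 1 K := hK.of_le (by exact_mod_cast Nat.le_add_left 1 k)
    rw [Nat.cast_succ, contDiff_succ_iff_fderiv] at hK ⊢
    have hderiv := hK1.hasFDerivAt_parametric_intervalIntegral a b
    refine ⟨fun x => (hderiv x).differentiableAt, by simp, ?_⟩
    rw [funext fun x => (hderiv x).fderiv]
    exact ih (hK.2.2.clm_comp contDiff_const)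

theorem ContDiffOn.exists_contDiff_eventuallyEq_nhdsSet {E F : Type*} [NormedAddCommGroup E]
    [NormedSpace ℝ E] [FiniteDimensional ℝ E] [NormedAddCommGroup F] [NormedSpace ℝ F]
    {n : ℕ∞} {f : E → F} {U K : Set E} (hf : ContDiffOn ℝ n f U) (hU : IsOpen U)
    (hK : IsClosed K) (hKU : K ⊆ U) :
    ∃ g : E → F, ContDiff ℝ n g ∧ g =ᶠ[𝓝ˢ K] f := by
  obtain ⟨φ, hφ0, hφ1, -⟩ := exists_contMDiffMap_zero_one_nhds_of_isClosed 𝓘(ℝ, E)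
    hU.isClosed_compl hK (disjoint_compl_left_iff_subset.2 hKU) (n := ⊤)
  have hφ : ContDiff ℝ ∞ φ := contMDiff_iff_contDiff.1 φ.contMDiff
  refine ⟨fun x => φ x • f x, contDiff_iff_contDiffAt.2 fun x => ?_, ?_⟩
  · by_cases hx : x ∈ U
    · exact (hφ.of_le (WithTop.coe_le_coe.2 le_top)).contDiffAt.smul
        (hf.contDiffAt (hU.mem_nhds hx))
    · refine (contDiffAt_const (c := (0 : F))).congr_of_eventuallyEq ?_
      filter_upwards [hφ0.filter_mono (nhds_le_nhdsSet hx)] with y hy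
      simp [hy]
  · filter_upwards [hφ1] with x hx
    simp [hx]

section CanonicalSlope

variable {E F : Type*} [NormedAddCommGroup E] [NormedSpace ℝ E]
  [NormedAddCommGroup F] [NormedSpace ℝ F]

noncomputable def canonicalSlope (f : E → F) (p : E × E × ℝ) : F :=
  if p.2.2 = 0 then fderiv ℝ f p.1 p.2.1 else p.2.2⁻¹ • (f (p.1 + p.2.2 • p.2.1) - f p.1)

theorem canonicalSlope_eventuallyEq {f g : E → F} {p : E × E × ℝ}
    (hfg : f =ᶠ[𝓝ˢ {p.1, p.1 + p.2.2 • p.2.1}] g) :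
    canonicalSlope f =ᶠ[𝓝 p] canonicalSlope g := by
  rw [nhdsSet_insert, nhdsSet_singleton, EventuallyEq, eventually_sup] at hfg
  have hcont : Continuous fun q : E × E × ℝ => q.1 + q.2.2 • q.2.1 := by fun_prop
  filter_upwards [continuous_fst.tendsto p |>.eventually hfg.1.eventually_nhds,
    hcont.tendsto p |>.eventually hfg.2.eventually_nhds]
    with q (hstart : f =ᶠ[𝓝 q.1] g) (hend : f =ᶠ[𝓝 (q.1 + q.2.2 • q.2.1)] g)
  unfold canonicalSlope
  split_ifs
  · rw [hstart.fderiv_eq]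
  · rw [hstart.self_of_nhds, hend.self_of_nhds]

theorem canonicalSlope_eq_intervalIntegral [CompleteSpace F] {g : E → F} (hg : ContDiff ℝ 1 g)
    (p : E × E × ℝ) :
    canonicalSlope g p = ∫ σ in (0 : ℝ)..1, fderiv ℝ g (p.1 + (σ * p.2.2) • p.2.1) p.2.1 := by
  obtain ⟨x, v, t⟩ := p
  simp only [canonicalSlope]
  split_ifs with ht
  · simp [ht]
  have hderiv : ∀ σ ∈ uIcc (0 : ℝ) 1, HasDerivAt (fun σ : ℝ => g (x + (σ * t) • v))
      (t • fderiv ℝ g (x + (σ * t) • v) v) σ := by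
    intro σ _
    have hline : HasDerivAt (fun σ : ℝ => x + (σ * t) • v) (t • v) σ := by
      simpa [mul_smul] using ((hasDerivAt_id σ).smul_const (t • v)).const_add x
    simpa [Function.comp_def] using
      (hg.differentiable one_ne_zero _).hasFDerivAt.comp_hasDerivAt σ hline
  have hcont : Continuous fun σ : ℝ => t • fderiv ℝ g (x + (σ * t) • v) v := by
    have := hg.continuous_fderiv one_ne_zero
    fun_prop
  have hftc :=
    intervalIntegral.integral_eq_sub_of_hasDerivAt hderiv (hcont.intervalIntegrable 0 1)
  simp only [one_mul, zero_mul, zero_smul, add_zero, intervalIntegral.integral_smul] at hftc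
  rw [← hftc, smul_smul, inv_mul_cancel₀ ht, one_smul]

theorem contDiffOn_succ_of_contDiffOn_canonicalSlope [FiniteDimensional ℝ E] {U : Set E}
    {f : E → F} {k : ℕ∞} (hU : IsOpen U)
    (hf : DifferentiableOn ℝ f U)
    (hF : ContDiffOn ℝ k (canonicalSlope f) {p | p.1 ∈ U ∧ p.1 + p.2.2 • p.2.1 ∈ U}) :
    ContDiffOn ℝ (k + 1) f U := by
  rw [contDiffOn_succ_iff_fderiv_of_isOpen hU]
  refine ⟨hf, by simp, contDiffOn_clm_apply.2 fun v => ?_⟩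
  have hzero : ∀ x, canonicalSlope f (x, v, 0) = fderiv ℝ f x v := fun x => if_pos rfl
  refine (hF.comp (by fun_prop : ContDiff ℝ k fun x : E => (x, v, (0 : ℝ))).contDiffOn
    fun x hx => ⟨hx, by simpa using hx⟩).congr fun x _ => (hzero x).symm

end CanonicalSlope

theorem ContDiff.canonicalSlope {E F : Type u} [NormedAddCommGroup E] [NormedSpace ℝ E]
    [NormedAddCommGroup F] [NormedSpace ℝ F] [CompleteSpace F] {g : E → F} {k : ℕ}
    (hg : ContDiff ℝ (k + 1) g) : ContDiff ℝ k (canonicalSlope g) := by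
  rw [funext (canonicalSlope_eq_intervalIntegral (hg.of_le le_add_self))]
  have hDg : ContDiff ℝ k (fderiv ℝ g) := hg.fderiv_right le_rfl
  exact ContDiff.parametric_intervalIntegral
    (K := fun q : (E × E × ℝ) × ℝ => fderiv ℝ g (q.1.1 + (q.2 * q.1.2.2) • q.1.2.1) q.1.2.1)
    ((hDg.comp (by fun_prop)).clm_apply (by fun_prop)) 0 1

theorem ContDiffOn.canonicalSlope {E F : Type u} [NormedAddCommGroup E] [NormedSpace ℝ E]
    [FiniteDimensional ℝ E] [NormedAddCommGroup F] [NormedSpace ℝ F] [CompleteSpace F]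
    {U : Set E} {f : E → F} {k : ℕ} (hU : IsOpen U)
    (hf : ContDiffOn ℝ (k + 1) f U) :
    ContDiffOn ℝ k (canonicalSlope f) {p | p.1 ∈ U ∧ p.1 + p.2.2 • p.2.1 ∈ U} := by
  rintro p ⟨hstart, hend⟩
  obtain ⟨g, hg, hgf⟩ := hf.exists_contDiff_eventuallyEq_nhdsSet (n := k + 1) hU
    (toFinite _).isClosed (insert_subset hstart (singleton_subset_iff.2 hend))
  have hg' : ContDiff ℝ (k + 1) g := by exact_mod_cast hg
  exact (hg'.canonicalSlope.contDiffAt.congr_of_eventuallyEq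
    (canonicalSlope_eventuallyEq hgf.symm)).contDiffWithinAt

/-- `f : ℝ^d → ℝ^m` is `Cⁿ` on an open set `U` (for `n ≥ 1`) iff `f` is `C¹` on
`U` and its canonical slope `F₀` is `C^{n−1}` on the first extended domain
`U^[1]`. Here `F₀(x,v,t) = t⁻¹ • (f(x+t•v) − f(x))` for `t ≠ 0` and
`F₀(x,v,0) = df(x)v`. -/
theorem Cn_iff_slope_Cn_minus_one {d m : ℕ}
    (U : Set (EuclideanSpace ℝ (Fin d))) (hU : IsOpen U)
    (f : EuclideanSpace ℝ (Fin d) → EuclideanSpace ℝ (Fin m))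
    (n : ℕ) (hn : 1 ≤ n)
    (F0 : EuclideanSpace ℝ (Fin d) × EuclideanSpace ℝ (Fin d) × ℝ →
      EuclideanSpace ℝ (Fin m))
    (hF0 : ∀ p, p.2.2 ≠ 0 →
      F0 p = (p.2.2)⁻¹ • (f (p.1 + p.2.2 • p.2.1) - f p.1))
    (hF0' : ∀ x v, F0 (x, v, 0) = fderiv ℝ f x v) :
    ContDiffOn ℝ n f U ↔
      (ContDiffOn ℝ 1 f U ∧
        ContDiffOn ℝ (n - 1 : ℕ) F0
          {p | p.1 ∈ U ∧ p.1 + p.2.2 • p.2.1 ∈ U}) := by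
  have hF0_eq : F0 = canonicalSlope f := by
    funext ⟨x, v, t⟩
    simp only [canonicalSlope]
    split_ifs with ht
    · rw [ht, hF0']
    · exact hF0 _ ht
  obtain ⟨k, rfl⟩ := Nat.exists_eq_add_of_le' hn
  rw [hF0_eq, Nat.add_sub_cancel, Nat.cast_succ]
  exact ⟨fun h => ⟨h.of_le le_add_self, h.canonicalSlope hU⟩, fun ⟨h1, hF⟩ =>
    contDiffOn_succ_of_contDiffOn_canonicalSlope hU (h1.differentiableOn one_ne_zero) hF⟩
end

section
/- Let E be a real normed vector space and U ⊆ E a nonempty open subset. Then the finite part {(x,v,t) ∈ U^[1] : t ≠ 0} is dense in U^[1] := {(x,v,t) ∈ E × E × ℝ : x ∈ U and x + t•v ∈ U}. -/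
/-- The finite part (where `t ≠ 0`) is dense in the first extended domain
`U^[1]` of a nonempty open subset `U` of a real normed vector space. -/
theorem finite_part_dense {E : Type*} [NormedAddCommGroup E] [NormedSpace ℝ E]
    (U : Set E) (hU : IsOpen U) (hne : U.Nonempty) :
    {p : E × E × ℝ | p.1 ∈ U ∧ p.1 + p.2.2 • p.2.1 ∈ U} ⊆
      closure {p : E × E × ℝ |
        (p.1 ∈ U ∧ p.1 + p.2.2 • p.2.1 ∈ U) ∧ p.2.2 ≠ 0} := by
  rintro ⟨x, v, t⟩ ⟨hx, hxt⟩
  by_cases ht : t ≠ 0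
  · exact subset_closure ⟨⟨hx, hxt⟩, ht⟩
  · push_neg at ht
    subst ht
    -- the set of s with x + s • v ∈ U is open and contains 0
    have hcont : Continuous fun s : ℝ => x + s • v := by continuity
    have hopen : IsOpen {s : ℝ | x + s • v ∈ U} := hU.preimage hcont
    have h0 : (0 : ℝ) ∈ {s : ℝ | x + s • v ∈ U} := by simpa using hxt
    obtain ⟨δ, hδ, hball⟩ := Metric.isOpen_iff.1 hopen 0 h0
    have htend : Filter.Tendsto (fun n : ℕ => ((x, v, δ / (2 * (n + 1))) : E × E × ℝ))
        Filter.atTop (nhds (x, v, 0)) := by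
      have : Filter.Tendsto (fun n : ℕ => δ / (2 * (n + 1))) Filter.atTop (nhds 0) := by
        apply Filter.Tendsto.div_atTop (tendsto_const_nhds : Filter.Tendsto
          (fun _ : ℕ => δ) Filter.atTop (nhds δ))
        apply Filter.Tendsto.const_mul_atTop (by norm_num)
        exact Filter.tendsto_atTop_add_const_right _ _ tendsto_natCast_atTop_atTop
      rw [nhds_prod_eq, nhds_prod_eq]
      exact
        ((tendsto_const_nhds : Filter.Tendsto (fun _ : ℕ => x) Filter.atTop (nhds x)).prodMk
          ((tendsto_const_nhds : Filter.Tendsto (fun _ : ℕ => v) Filter.atTop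
            (nhds v)).prodMk this))
    refine mem_closure_of_tendsto htend (Filter.Eventually.of_forall fun n => ?_)
    have hpos : 0 < δ / (2 * (n + 1 : ℝ)) := by positivity
    have hlt : δ / (2 * (n + 1 : ℝ)) < δ := by
      rw [div_lt_iff₀ (by positivity)]
      nlinarith
    refine ⟨⟨hx, hball ?_⟩, ne_of_gt hpos⟩
    simp only [Metric.mem_ball, Real.dist_eq, sub_zero]
    rwa [abs_of_pos hpos]
end

section
/- Let E and W be real normed vector spaces, U ⊆ E open, f : E → W, and let F be a slope extension of f on U. Then for every x ∈ U, the map v ↦ F(x,v,0) is additive and ℝ-homogeneous: F(x, v + w, 0) = F(x, v, 0) + F(x, w, 0) and F(x, c•v, 0) = c • F(x, v, 0) for all v, w ∈ E and c ∈ ℝ. -/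
/-- Linearity of the differential is a theorem in topological calculus: for any
slope extension `F` of `f` on an open set `U`, the map `v ↦ F(x,v,0)` is
additive and ℝ-homogeneous at every `x ∈ U`. -/
theorem slope_extension_linear {E W : Type*}
    [NormedAddCommGroup E] [NormedSpace ℝ E]
    [NormedAddCommGroup W] [NormedSpace ℝ W]
    (U : Set E) (hU : IsOpen U) (f : E → W)
    (F : E × E × ℝ → W) (hF : IsSlopeExt f U F)
    (x : E) (hx : x ∈ U) :
    (∀ v w : E, F (x, v + w, 0) = F (x, v, 0) + F (x, w, 0)) ∧
    (∀ (c : ℝ) (v : E), F (x, c • v, 0) = c • F (x, v, 0)) := by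
  obtain ⟨hcont, heq⟩ := hF
  have hSopen : IsOpen {p : E × E × ℝ | p.1 ∈ U ∧ p.1 + p.2.2 • p.2.1 ∈ U} := by
    have h1 : IsOpen ((fun p : E × E × ℝ => p.1) ⁻¹' U) := hU.preimage continuous_fst
    have h2 : IsOpen ((fun p : E × E × ℝ => p.1 + p.2.2 • p.2.1) ⁻¹' U) :=
      hU.preimage (continuous_fst.add (continuous_snd.snd.smul continuous_snd.fst))
    exact h1.inter h2
  have hCA : ∀ (y v : E), y ∈ U → ContinuousAt F (y, v, 0) := fun y v hy =>
    hcont.continuousAt (hSopen.mem_nhds ⟨hy, by simpa using hy⟩)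
  -- limits along curves into (x, w, 0)
  have tends2 : ∀ (w : E) (γ : ℝ → E × E × ℝ), Continuous γ → γ 0 = (x, w, 0) →
      Filter.Tendsto (fun t => F (γ t)) (nhds 0) (nhds (F (x, w, 0))) := by
    intro w γ hγ h0
    exact (hCA x w hx).tendsto.comp (h0 ▸ hγ.tendsto 0)
  have tends : ∀ v : E, Filter.Tendsto (fun t : ℝ => F (x, v, t)) (nhdsWithin 0 {0}ᶜ)
      (nhds (F (x, v, 0))) := by
    intro v
    exact (tends2 v (fun t => (x, v, t)) (by fun_prop) rfl).mono_left nhdsWithin_le_nhds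
  have hev : ∀ v : E, ∀ᶠ t : ℝ in nhds 0, x + t • v ∈ U := by
    intro v
    have hc : Filter.Tendsto (fun t : ℝ => x + t • v) (nhds 0) (nhds x) := by
      have : Continuous (fun t : ℝ => x + t • v) := by fun_prop
      simpa using this.tendsto 0
    exact hc (hU.mem_nhds hx)
  constructor
  · intro v w
    have hevS : ∀ᶠ t : ℝ in nhdsWithin 0 {0}ᶜ,
        F (x, v + w, t) = F (x, v, t) + F (x + t • v, w, t) := by
      filter_upwards [self_mem_nhdsWithin,
        (((hev v).and (hev (v + w)))).filter_mono nhdsWithin_le_nhds] with t ht h12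
      obtain ⟨h1, h2⟩ := h12
      have ht : t ≠ 0 := ht
      have h2' : x + t • (v + w) ∈ U := h2
      have h3 : (x + t • v) + t • w ∈ U := by
        rwa [smul_add, ← add_assoc] at h2'
      rw [heq (x, v + w, t) hx h2' ht, heq (x, v, t) hx h1 ht,
        heq (x + t • v, w, t) h1 h3 ht]
      rw [← smul_add]
      congr 1
      have : x + t • (v + w) = x + t • v + t • w := by rw [smul_add, add_assoc]
      rw [this]
      abel
    have hR : Filter.Tendsto (fun t : ℝ => F (x, v, t) + F (x + t • v, w, t))
        (nhdsWithin 0 {0}ᶜ) (nhds (F (x, v, 0) + F (x, w, 0))) := by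
      refine (tends v).add ?_
      exact (tends2 w (fun t => (x + t • v, w, t)) (by fun_prop) (by simp)).mono_left
        nhdsWithin_le_nhds
    exact tendsto_nhds_unique (tends (v + w)) (hR.congr' (Filter.EventuallyEq.symm hevS))
  · intro c v
    rcases eq_or_ne c 0 with hc | hc
    · subst hc
      simp only [zero_smul]
      have hevS : ∀ᶠ t : ℝ in nhdsWithin 0 {0}ᶜ, F (x, (0 : E), t) = 0 := by
        filter_upwards [self_mem_nhdsWithin] with t ht
        have ht : t ≠ 0 := ht
        rw [heq (x, (0 : E), t) hx (by simpa using hx) ht]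
        simp
      exact tendsto_nhds_unique (tends 0) (tendsto_const_nhds.congr' (Filter.EventuallyEq.symm hevS))
    · have hevS : ∀ᶠ t : ℝ in nhdsWithin 0 {0}ᶜ,
          F (x, c • v, t) = c • F (x, v, c * t) := by
        have hev' : ∀ᶠ t : ℝ in nhds 0, x + (c * t) • v ∈ U := by
          have hc2 : Filter.Tendsto (fun t : ℝ => c * t) (nhds 0) (nhds 0) := by
            have : Continuous (fun t : ℝ => c * t) := by fun_prop
            simpa using this.tendsto 0
          exact hc2.eventually (hev v)
        filter_upwards [self_mem_nhdsWithin, hev'.filter_mono nhdsWithin_le_nhds]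
          with t ht h1
        have ht : t ≠ 0 := ht
        have hpt : x + t • (c • v) = x + (c * t) • v := by rw [smul_smul, mul_comm]
        have h1' : x + t • (c • v) ∈ U := by rwa [hpt]
        rw [heq (x, c • v, t) hx h1' ht,
          heq (x, v, c * t) hx h1 (mul_ne_zero hc ht)]
        show t⁻¹ • (f (x + t • (c • v)) - f x) =
          c • ((c * t)⁻¹ • (f (x + (c * t) • v) - f x))
        rw [hpt, smul_smul]
        congr 1
        field_simp
      have hR : Filter.Tendsto (fun t : ℝ => c • F (x, v, c * t))
          (nhdsWithin 0 {0}ᶜ) (nhds (c • F (x, v, 0))) := by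
        have := (tends2 v (fun t => (x, v, c * t)) (by fun_prop) (by simp)).mono_left
          (nhdsWithin_le_nhds (s := ({0}ᶜ : Set ℝ)))
        exact this.const_smul c
      exact tendsto_nhds_unique (tends (c • v)) (hR.congr' (Filter.EventuallyEq.symm hevS))
end

section
/- Let E and W be real normed vector spaces, U ⊆ E open, f : E → W, and let F be a slope extension of f on U. Then the groupoid cocycle identity holds for all scalars t, including t = 0: whenever (x, v, t) ∈ U^[1] and (x, v + w, t) ∈ U^[1], one also has (x + t•v, w, t) ∈ U^[1] and F(x, v + w, t) = F(x, v, t) + F(x + t•v, w, t). -/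
/-- The groupoid cocycle identity
`F(x, v + w, t) = F(x, v, t) + F(x + t•v, w, t)` holds for every slope extension
`F` of `f` on an open set `U`, for all scalars `t`, including `t = 0`. -/
theorem slope_extension_cocycle {E W : Type*}
    [NormedAddCommGroup E] [NormedSpace ℝ E]
    [NormedAddCommGroup W] [NormedSpace ℝ W]
    (U : Set E) (hU : IsOpen U) (f : E → W)
    (F : E × E × ℝ → W) (hF : IsSlopeExt f U F) :
    ∀ (x v w : E) (t : ℝ),
      (x ∈ U ∧ x + t • v ∈ U) → (x ∈ U ∧ x + t • (v + w) ∈ U) →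
      ((x + t • v ∈ U ∧ (x + t • v) + t • w ∈ U) ∧
        F (x, v + w, t) = F (x, v, t) + F (x + t • v, w, t)) := by
  obtain ⟨hFc, hFeq⟩ := hF
  set S : Set (E × E × ℝ) := {p : E × E × ℝ | p.1 ∈ U ∧ p.1 + p.2.2 • p.2.1 ∈ U} with hS
  have hSopen : IsOpen S := by
    have h1 : IsOpen ((fun p : E × E × ℝ => p.1) ⁻¹' U) := hU.preimage continuous_fst
    have h2 : IsOpen ((fun p : E × E × ℝ => p.1 + p.2.2 • p.2.1) ⁻¹' U) :=
      hU.preimage (continuous_fst.add (continuous_snd.snd.smul continuous_snd.fst))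
    exact h1.inter h2
  rintro x v w t ⟨hx, hxv⟩ ⟨-, hxvw⟩
  have hadd : x + t • v + t • w = x + t • (v + w) := by rw [add_assoc, ← smul_add]
  have hmem : x + t • v + t • w ∈ U := hadd ▸ hxvw
  refine ⟨⟨hxv, hmem⟩, ?_⟩
  rcases eq_or_ne t 0 with rfl | ht
  · -- continuity argument at t = 0
    simp only [zero_smul, add_zero]
    -- g s := F (x, v+w, s) - F (x, v, s) - F (x + s•v, w, s)
    set g : ℝ → W := fun s => F (x, v + w, s) - F (x, v, s) - F (x + s • v, w, s) with hg
    have hmemS : ∀ u : E, ((x, u, (0:ℝ)) : E × E × ℝ) ∈ S := by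
      intro u; constructor <;> simp [hx]
    have hCA : ∀ u : E, ContinuousAt F (x, u, (0:ℝ)) := fun u =>
      hFc.continuousAt (hSopen.mem_nhds (hmemS u))
    have hgc : ContinuousAt g 0 := by
      have c1 : ContinuousAt (fun s : ℝ => F (x, v + w, s)) 0 :=
        ContinuousAt.comp (hCA (v + w))
          (by fun_prop : ContinuousAt (fun s : ℝ => ((x, v + w, s) : E × E × ℝ)) 0)
      have c2 : ContinuousAt (fun s : ℝ => F (x, v, s)) 0 :=
        ContinuousAt.comp (hCA v)
          (by fun_prop : ContinuousAt (fun s : ℝ => ((x, v, s) : E × E × ℝ)) 0)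
      have c3 : ContinuousAt (fun s : ℝ => F (x + s • v, w, s)) 0 := by
        have hc : ContinuousAt (fun s : ℝ => ((x + s • v, w, s) : E × E × ℝ)) 0 := by fun_prop
        have hCA3 : ContinuousAt F ((fun s : ℝ => ((x + s • v, w, s) : E × E × ℝ)) 0) := by
          simpa using hCA w
        exact ContinuousAt.comp hCA3 hc
      exact (c1.sub c2).sub c3
    -- eventually, for s near 0, all three points lie in U
    have hev : ∀ᶠ s : ℝ in nhds 0, x + s • (v + w) ∈ U ∧ x + s • v ∈ U ∧
        x + s • v + s • w ∈ U := by
      have key : ∀ u : E, ∀ᶠ s : ℝ in nhds 0, x + s • u ∈ U := by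
        intro u
        have hc : ContinuousAt (fun s : ℝ => x + s • u) 0 := by fun_prop
        exact hc (by simpa using hU.mem_nhds hx)
      filter_upwards [key (v + w), key v] with s h1 h2
      exact ⟨h1, h2, by rw [add_assoc, ← smul_add]; exact h1⟩
    have hg0 : ∀ᶠ s : ℝ in nhdsWithin 0 {0}ᶜ, g s = 0 := by
      filter_upwards [self_mem_nhdsWithin,
        nhdsWithin_le_nhds hev] with s hs ⟨h1, h2, h3⟩
      have hs0 : s ≠ 0 := hs
      have e1 := hFeq (x, v + w, s) hx h1 hs0
      have e2 := hFeq (x, v, s) hx h2 hs0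
      have e3 := hFeq (x + s • v, w, s) h2 h3 hs0
      simp only at e1 e2 e3
      rw [hg]
      simp only [e1, e2, e3]
      rw [show x + s • v + s • w = x + s • (v + w) by rw [add_assoc, ← smul_add]]
      module
    have h1 : Filter.Tendsto g (nhdsWithin 0 {0}ᶜ) (nhds (g 0)) :=
      (hgc.tendsto).mono_left nhdsWithin_le_nhds
    have h2 : Filter.Tendsto g (nhdsWithin 0 {0}ᶜ) (nhds 0) :=
      Filter.Tendsto.congr' (Filter.EventuallyEq.symm hg0) tendsto_const_nhds
    have : g 0 = 0 := tendsto_nhds_unique h1 h2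
    have hg0' : F (x, v + w, 0) - F (x, v, 0) - F (x, w, 0) = 0 := by
      simpa [hg] using ‹g 0 = 0›
    linear_combination (norm := abel) hg0'
  · have e1 := hFeq (x, v + w, t) hx hxvw ht
    have e2 := hFeq (x, v, t) hx hxv ht
    have e3 := hFeq (x + t • v, w, t) hxv hmem ht
    simp only at e1 e2 e3
    rw [e1, e2, e3, hadd]
    module
end
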